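/- Let (A, B) be a real matrix pair with A ∈ ℝ^{n×n} and B ∈ ℝ^{n×r} that is controllable with controllability index m, and suppose moreover that mr = n. Then for each real matrix M ∈ ℝ^{n×n}, the controllability index of (M + gA, B) equals exactly m for all but at most finitely many values of the real scalar g. -/

import Mathlib

open Matrix Finset

/-- The controllability matrix `[B, AB, …, A^{k-1}B]` of the pair `(A, B)`. -/
def ctrbMat {ι κ : Type*} [Fintype ι] [DecidableEq ι]
    (A : Matrix ι ι ℝ) (B : Matrix ι κ ℝ) (k : ℕ) : Matrix ι (Fin k × κ) ℝ :=
  Matrix.of fun i p => ((A ^ (p.1 : ℕ)) * B) i p.2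

/-- `(A, B)` is controllable if its controllability matrix has full rank. -/
def Controllable {ι κ : Type*} [Fintype ι] [DecidableEq ι] [Fintype κ]
    (A : Matrix ι ι ℝ) (B : Matrix ι κ ℝ) : Prop :=
  (ctrbMat A B (Fintype.card ι)).rank = Fintype.card ι

/-- The controllability index: the smallest positive `k` with
`rank [B, AB, …, A^{k-1}B]` full. -/
noncomputable def ctrlIndex {ι κ : Type*} [Fintype ι] [DecidableEq ι] [Fintype κ]
    (A : Matrix ι ι ℝ) (B : Matrix ι κ ℝ) : ℕ :=
  sInf {k | 0 < k ∧ (ctrbMat A B k).rank = Fintype.card ι}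

/-- `(C, A)` is observable iff `(Aᵀ, Cᵀ)` is controllable. -/
def Observable {ι κ : Type*} [Fintype ι] [DecidableEq ι] [Fintype κ]
    (C : Matrix κ ι ℝ) (A : Matrix ι ι ℝ) : Prop :=
  Controllable Aᵀ Cᵀ

/-! Since `m r = n`, the `m`-step controllability matrix is square, so it has full rank exactly
when its determinant is nonzero; and full rank at `m` forces both controllability and index
exactly `m`, because fewer than `m` blocks give fewer than `n` columns. The determinant of
`[B, (tM + A)B, …, (tM + A)^{m-1}B]` is a polynomial in `t`, nonzero at `t = 0` because `(A, B)`
has index `m`, so it has finitely many roots. For `g ≠ 0`, `M + gA = g (g⁻¹M + A)`, and scaling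
the matrix by `g` multiplies the `j`-th block by `gʲ`, which does not change the rank. -/

open Polynomial Pointwise

section GenericRank

variable {K ι ι' : Type*} [Field K] [Fintype ι] [DecidableEq ι]

theorem Matrix.rank_eq_card_iff_det_ne_zero {A : Matrix ι ι K} :
    A.rank = Fintype.card ι ↔ A.det ≠ 0 := by
  refine ⟨fun h => ?_, rank_of_det_ne_zero⟩
  rw [← isUnit_iff_ne_zero, ← isUnit_iff_isUnit_det, ← mulVec_surjective_iff_isUnit]
  have : LinearMap.range A.mulVecLin = ⊤ :=
    Submodule.eq_top_of_finrank_eq (by rw [← rank, h, Module.finrank_fintype_fun_eq_card])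
  exact LinearMap.range_eq_top.mp this

/-- The determinant of a square reindexing of `P` is a polynomial that is nonzero at `t₀`, and
the rank is full exactly off its roots. -/
theorem Matrix.finite_setOf_rank_map_eval_ne [Fintype ι'] (e : ι ≃ ι') (P : Matrix ι ι' K[X])
    {t₀ : K} (h₀ : (P.map (evalRingHom t₀)).rank = Fintype.card ι) :
    {t | (P.map (evalRingHom t)).rank ≠ Fintype.card ι}.Finite := by
  have hdet (t : K) : (P.map (evalRingHom t)).rank = Fintype.card ι ↔
      (P.submatrix id e).det.eval t ≠ 0 := by
    rw [← rank_submatrix _ (Equiv.refl ι) e, rank_eq_card_iff_det_ne_zero, ← coe_evalRingHom,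
      RingHom.map_det]
    rfl
  have hq : (P.submatrix id e).det ≠ 0 := fun hq => (hdet t₀).1 h₀ (by rw [hq, eval_zero])
  exact (finite_setOfPred_isRoot hq).subset fun t ht => by_contra fun h => ht ((hdet t).2 h)

end GenericRank

section Controllability

variable {ι κ : Type*} [Fintype ι] [DecidableEq ι]

noncomputable def ctrbMatPoly (P : Matrix ι ι ℝ[X]) (B : Matrix ι κ ℝ) (k : ℕ) :
    Matrix ι (Fin k × κ) ℝ[X] :=
  of fun i p => (P ^ (p.1 : ℕ) * B.map C) i p.2

theorem ctrbMatPoly_map_eval (P : Matrix ι ι ℝ[X]) (B : Matrix ι κ ℝ) (k : ℕ) (t : ℝ) :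
    (ctrbMatPoly P B k).map (evalRingHom t) = ctrbMat (P.map (evalRingHom t)) B k := by
  have hB : (B.map C).map (evalRingHom t) = B := by ext; simp
  have hpow (j : ℕ) : (P ^ j * B.map C).map (evalRingHom t) = P.map (evalRingHom t) ^ j * B := by
    rw [Matrix.map_mul, hB, ← RingHom.mapMatrix_apply, map_pow, RingHom.mapMatrix_apply]
  ext i p
  exact congr_fun₂ (hpow p.1) i p.2

variable [Fintype κ]

theorem rank_ctrbMat_smul {c : ℝ} (hc : c ≠ 0) (X : Matrix ι ι ℝ) (B : Matrix ι κ ℝ) (k : ℕ) :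
    (ctrbMat (c • X) B k).rank = (ctrbMat X B k).rank := by
  classical
  have : ctrbMat (c • X) B k =
      ctrbMat X B k * (diagonal fun p => c ^ (p.1 : ℕ) : Matrix (Fin k × κ) (Fin k × κ) ℝ) := by
    ext i p
    simp only [ctrbMat, of_apply, mul_diagonal, _root_.smul_pow, smul_mul, Matrix.smul_apply,
      smul_eq_mul, mul_comm]
  rw [this, rank_mul_eq_left_of_det_ne_zero]
  simp [det_diagonal, Finset.prod_ne_zero_iff, hc]

theorem rank_ctrbMat_mono (X : Matrix ι ι ℝ) (B : Matrix ι κ ℝ) :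
    Monotone fun k => (ctrbMat X B k).rank := by
  intro j k hjk
  have : ctrbMat X B j = (ctrbMat X B k).submatrix id (Prod.map (Fin.castLE hjk) id) := by
    ext; simp [ctrbMat]
  simp only [this]
  exact rank_submatrix_le _ _ _

theorem rank_ctrbMat_le_mul (X : Matrix ι ι ℝ) (B : Matrix ι κ ℝ) (k : ℕ) :
    (ctrbMat X B k).rank ≤ k * Fintype.card κ := by
  simpa using (ctrbMat X B k).rank_le_card_width

theorem controllable_of_rank_ctrbMat_eq {X : Matrix ι ι ℝ} {B : Matrix ι κ ℝ} {k : ℕ}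
    (hk : k ≤ Fintype.card ι) (h : (ctrbMat X B k).rank = Fintype.card ι) : Controllable X B :=
  le_antisymm (rank_le_card_height _) (h.symm.le.trans (rank_ctrbMat_mono X B hk))

theorem Controllable.ctrlIndex_mem {X : Matrix ι ι ℝ} {B : Matrix ι κ ℝ} (h : Controllable X B) :
    ctrlIndex X B ∈ {k | 0 < k ∧ (ctrbMat X B k).rank = Fintype.card ι} := by
  refine Nat.sInf_mem ⟨max (Fintype.card ι) 1, by omega, le_antisymm (rank_le_card_height _) ?_⟩
  exact (Eq.symm h).le.trans (rank_ctrbMat_mono X B (le_max_left _ _))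

theorem ctrlIndex_eq_of_rank_ctrbMat_eq {X : Matrix ι ι ℝ} {B : Matrix ι κ ℝ} {k : ℕ}
    (hk : 0 < k) (hκ : 0 < Fintype.card κ) (hkκ : k * Fintype.card κ = Fintype.card ι)
    (h : (ctrbMat X B k).rank = Fintype.card ι) : ctrlIndex X B = k := by
  refine le_antisymm (Nat.sInf_le ⟨hk, h⟩) (le_csInf ⟨k, hk, h⟩ ?_)
  rintro j ⟨-, hj⟩
  have := rank_ctrbMat_le_mul X B j
  exact Nat.le_of_mul_le_mul_right (by omega) hκ

section IsEmpty

variable [IsEmpty ι] (X : Matrix ι ι ℝ) (B : Matrix ι κ ℝ)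

theorem rank_ctrbMat_of_isEmpty (k : ℕ) : (ctrbMat X B k).rank = Fintype.card ι := by
  simpa using (ctrbMat X B k).rank_le_card_height

theorem controllable_of_isEmpty : Controllable X B :=
  rank_ctrbMat_of_isEmpty X B _

theorem ctrlIndex_eq_one_of_isEmpty : ctrlIndex X B = 1 :=
  le_antisymm (Nat.sInf_le ⟨one_pos, rank_ctrbMat_of_isEmpty X B 1⟩)
    (le_csInf ⟨1, one_pos, rank_ctrbMat_of_isEmpty X B 1⟩ fun _ hk => hk.1)

end IsEmpty

theorem finite_setOf_rank_ctrbMat_add_smul_ne {A : Matrix ι ι ℝ} {B : Matrix ι κ ℝ} {k : ℕ}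
    (hk : k * Fintype.card κ = Fintype.card ι) (hA : (ctrbMat A B k).rank = Fintype.card ι)
    (M : Matrix ι ι ℝ) :
    {g : ℝ | (ctrbMat (M + g • A) B k).rank ≠ Fintype.card ι}.Finite := by
  have e : ι ≃ Fin k × κ := Fintype.equivOfCardEq (by simp [hk])
  have hpencil (t : ℝ) : ((X : ℝ[X]) • M.map C + A.map C).map (evalRingHom t) = t • M + A := by
    ext
    simp [mul_comm _ t]
  have hT := finite_setOf_rank_map_eval_ne e (ctrbMatPoly ((X : ℝ[X]) • M.map C + A.map C) B k)
    (t₀ := 0) (by rw [ctrbMatPoly_map_eval, hpencil, zero_smul, zero_add]; exact hA)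
  simp only [ctrbMatPoly_map_eval, hpencil] at hT
  refine (hT.inv.insert 0).subset fun g hg => ?_
  rcases eq_or_ne g 0 with rfl | hg0
  · exact Set.mem_insert _ _
  refine Or.inr ?_
  rw [Set.mem_inv, Set.mem_ofPred_eq]
  rwa [show g⁻¹ • M + A = g⁻¹ • (M + g • A) by
    rw [smul_add, smul_smul, inv_mul_cancel₀ hg0, one_smul], rank_ctrbMat_smul (inv_ne_zero hg0)]

end Controllability

/-- **Lemma 5, second part.** If `(A, B)` is controllable with
controllability index `m` and `m r = n`, then for each real matrix `M`, the
controllability index of `(M + gA, B)` equals exactly `m` for all but at most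
finitely many real scalars `g`. -/
theorem controllable_perturbation_exact_index
    {n r : ℕ} (A : Matrix (Fin n) (Fin n) ℝ) (B : Matrix (Fin n) (Fin r) ℝ)
    (m : ℕ)
    (hc : Controllable A B) (hidx : ctrlIndex A B = m)
    (hmr : m * r = n)
    (M : Matrix (Fin n) (Fin n) ℝ) :
    {g : ℝ | ¬ (Controllable (M + g • A) B ∧ ctrlIndex (M + g • A) B = m)}.Finite := by
  obtain rfl | hr := Nat.eq_zero_or_pos r
  · obtain rfl : n = 0 := by simpa using hmr.symm
    have hm : m = 1 := hidx ▸ ctrlIndex_eq_one_of_isEmpty A B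
    simp [hm, controllable_of_isEmpty, ctrlIndex_eq_one_of_isEmpty]
  obtain ⟨hm, hA⟩ := hidx ▸ hc.ctrlIndex_mem
  have hmn : m ≤ n := hmr ▸ Nat.le_mul_of_pos_right m hr
  refine (finite_setOf_rank_ctrbMat_add_smul_ne (by simpa using hmr) hA M).subset
    fun g hg hrank => hg ⟨controllable_of_rank_ctrbMat_eq (by simpa using hmn) hrank, ?_⟩
  exact ctrlIndex_eq_of_rank_ctrbMat_eq hm (by simpa using hr) (by simpa using hmr) hrank
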